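/- Let σ ∈ C([0,∞)) ∩ C¹_loc((0,∞)) with σ(0) = 0, and for β ∈ (0,1) and M ∈ [2,∞) let Θ_{β,M}:[0,∞)→ℝ be the unique function with Θ_{β,M}(0) = 0 and Θ_{β,M}′(ξ) = φ_β(ξ) ζ_M(ξ) σ′(ξ), i.e. Θ_{β,M}(ξ) = ∫_0^ξ φ_β ζ_M σ′. Then there exists a constant c ∈ (0,∞), independent of β, M, σ, and ξ, such that for every ξ ∈ [0,∞), |Θ_{β,M}(ξ) − σ(ξ)| ≤ c ( sup_{ξ′∈[0, min(β,ξ)]} |σ(ξ′)| + |σ(ξ)| 𝟙_{ξ > M} + sup_{ξ′∈[M, min(M+1,ξ)]} |σ(ξ′)| 𝟙_{ξ > M} ). -/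
import Mathlib


open MeasureTheory

/-- The small-value cutoff `φ_β`: `0` on `[0,β/2]`, `1` on `[β,∞)`, linear in between. -/
noncomputable def phicut (β ξ : ℝ) : ℝ := min 1 (max 0 ((ξ - β/2) / (β/2)))

/-- The large-value cutoff `ζ_M`: `1` on `[0,M]`, `0` on `[M+1,∞)`, linear in between. -/
noncomputable def zetacut (M ξ : ℝ) : ℝ := min 1 (max 0 (M + 1 - ξ))

/-- `Θ_{β,M}(ξ) = ∫_0^ξ φ_β ζ_M σ′`. -/
noncomputable def Theta (σ : ℝ → ℝ) (β M ξ : ℝ) : ℝ :=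
  ∫ s in (0:ℝ)..ξ, phicut β s * zetacut M s * deriv σ s

lemma phicut_eq_zero {β s : ℝ} (hβ : 0 < β) (hs : s ≤ β/2) : phicut β s = 0 := by
  have h : (s - β/2) / (β/2) ≤ 0 := by
    rw [div_nonpos_iff]; right; constructor <;> linarith
  unfold phicut
  rw [max_eq_left h, min_eq_right zero_le_one]

lemma phicut_eq_lin {β s : ℝ} (hβ : 0 < β) (h1 : β/2 ≤ s) (h2 : s ≤ β) :
    phicut β s = (s - β/2) / (β/2) := by
  have hβ2 : (0:ℝ) < β/2 := by linarith
  unfold phicut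
  rw [max_eq_right (div_nonneg (by linarith) hβ2.le),
    min_eq_right ((div_le_one hβ2).mpr (by linarith))]

lemma phicut_eq_one {β s : ℝ} (hβ : 0 < β) (hs : β ≤ s) : phicut β s = 1 := by
  have hβ2 : (0:ℝ) < β/2 := by linarith
  have h : (1:ℝ) ≤ (s - β/2) / (β/2) := (one_le_div hβ2).mpr (by linarith)
  unfold phicut
  rw [max_eq_right (by linarith), min_eq_left h]

lemma zetacut_eq_one {M s : ℝ} (hs : s ≤ M) : zetacut M s = 1 := by
  unfold zetacut
  rw [max_eq_right (by linarith), min_eq_left (by linarith)]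

lemma zetacut_eq_lin {M s : ℝ} (h1 : M ≤ s) (h2 : s ≤ M + 1) : zetacut M s = M + 1 - s := by
  unfold zetacut
  rw [max_eq_right (by linarith), min_eq_right (by linarith)]

lemma zetacut_eq_zero {M s : ℝ} (hs : M + 1 ≤ s) : zetacut M s = 0 := by
  unfold zetacut
  rw [max_eq_left (by linarith), min_eq_right zero_le_one]

lemma continuous_phicut (β : ℝ) : Continuous (phicut β) :=
  continuous_const.min (continuous_const.max ((continuous_id.sub continuous_const).div_const _))

lemma continuous_zetacut (M : ℝ) : Continuous (zetacut M) :=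
  continuous_const.min (continuous_const.max (continuous_const.sub continuous_id))

/-- There is a universal constant `c`, independent of `β`, `M`, `σ`, and `ξ`, such
that `|Θ_{β,M}(ξ) − σ(ξ)| ≤ c (sup_{[0,β∧ξ]} |σ| + |σ(ξ)|𝟙_{ξ>M}
+ sup_{[M,(M+1)∧ξ]} |σ| 𝟙_{ξ>M})`. -/
theorem stmt14 :
    ∃ c : ℝ, 0 < c ∧
      ∀ σ : ℝ → ℝ, ContinuousOn σ (Set.Ici 0) → σ 0 = 0 →
        DifferentiableOn ℝ σ (Set.Ioi 0) → ContinuousOn (deriv σ) (Set.Ioi 0) →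
        ∀ β ∈ Set.Ioo (0:ℝ) 1, ∀ M : ℝ, 2 ≤ M → ∀ ξ : ℝ, 0 ≤ ξ →
          |Theta σ β M ξ - σ ξ|
            ≤ c * (sSup ((fun ξ' => |σ ξ'|) '' Set.Icc 0 (min β ξ))
              + (if M < ξ then |σ ξ| else 0)
              + (if M < ξ then sSup ((fun ξ' => |σ ξ'|) '' Set.Icc M (min (M+1) ξ))
                  else 0)) := by
  refine ⟨3, by norm_num, ?_⟩
  intro σ hσc hσ0 hσd hσd' β hβ M hM ξ hξ
  obtain ⟨hβ0, hβ1⟩ := hβ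
  have hβ2 : (0:ℝ) < β/2 := by linarith
  rcases le_or_gt ξ (β/2) with hcase | hcase
  · -- small ξ : Θ = 0
    have hmin : min β ξ = ξ := min_eq_right (by linarith)
    have hif : ¬ M < ξ := by linarith
    rw [if_neg hif, if_neg hif]
    set S₁ := sSup ((fun ξ' => |σ ξ'|) '' Set.Icc 0 (min β ξ)) with hS₁def
    have hσc1 : ContinuousOn σ (Set.Icc 0 (min β ξ)) := hσc.mono (fun x hx => hx.1)
    have hS₁ : ∀ x ∈ Set.Icc 0 (min β ξ), |σ x| ≤ S₁ := fun x hx =>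
      le_csSup ((isCompact_Icc.image_of_continuousOn hσc1.abs).bddAbove) ⟨x, hx, rfl⟩
    have hΘ : Theta σ β M ξ = 0 := by
      unfold Theta
      have hcong : Set.EqOn (fun s => phicut β s * zetacut M s * deriv σ s)
          (fun _ => (0:ℝ)) (Set.uIcc 0 ξ) := by
        intro s hs
        rw [Set.uIcc_of_le hξ] at hs
        simp [phicut_eq_zero hβ0 (le_trans hs.2 hcase)]
      rw [intervalIntegral.integral_congr hcong]
      simp
    rw [hΘ, zero_sub, abs_neg]
    have h1 := hS₁ ξ (by rw [hmin]; exact ⟨hξ, le_rfl⟩)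
    linarith [abs_nonneg (σ ξ)]
  · -- main case
    set b := min β ξ with hbdef
    set m := min M ξ with hmdef
    set m' := min (M+1) ξ with hm'def
    have hβb : β/2 ≤ b := le_min (by linarith) hcase.le
    have hb0 : 0 < b := lt_of_lt_of_le hβ2 hβb
    have hbβ : b ≤ β := min_le_left _ _
    have hbξ : b ≤ ξ := min_le_right _ _
    have hbm : b ≤ m := min_le_min (by linarith) le_rfl
    have hmm' : m ≤ m' := min_le_min (by linarith) le_rfl
    have hm'ξ : m' ≤ ξ := min_le_right _ _
    have hmM : m ≤ M := min_le_left _ _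
    have hm0 : 0 < m := lt_of_lt_of_le hb0 hbm
    set S₁ := sSup ((fun ξ' => |σ ξ'|) '' Set.Icc 0 b) with hS₁def
    have hσc1 : ContinuousOn σ (Set.Icc 0 b) := hσc.mono (fun x hx => hx.1)
    have hS₁ : ∀ x ∈ Set.Icc 0 b, |σ x| ≤ S₁ := fun x hx =>
      le_csSup ((isCompact_Icc.image_of_continuousOn hσc1.abs).bddAbove) ⟨x, hx, rfl⟩
    have hS₁0 : 0 ≤ S₁ := le_trans (abs_nonneg _) (hS₁ 0 ⟨le_rfl, hb0.le⟩)
    have hσb : |σ b| ≤ S₁ := hS₁ b ⟨hb0.le, le_rfl⟩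
    set f := fun s => phicut β s * zetacut M s * deriv σ s with hfdef
    have hfc : ContinuousOn f (Set.Ioi 0) :=
      ((continuous_phicut β).continuousOn.mul (continuous_zetacut M).continuousOn).mul hσd'
    have hfint : ∀ x y : ℝ, 0 < x → x ≤ y → IntervalIntegrable f volume x y := by
      intro x y hx hxy
      apply ContinuousOn.intervalIntegrable
      apply hfc.mono
      intro t ht
      rw [Set.uIcc_of_le hxy] at ht
      exact lt_of_lt_of_le hx ht.1
    have hdint : ∀ x y : ℝ, 0 < x → x ≤ y → IntervalIntegrable (deriv σ) volume x y := by
      intro x y hx hxy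
      apply ContinuousOn.intervalIntegrable
      apply hσd'.mono
      intro t ht
      rw [Set.uIcc_of_le hxy] at ht
      exact lt_of_lt_of_le hx ht.1
    have hi1 : IntervalIntegrable f volume 0 (β/2) := by
      apply ContinuousOn.intervalIntegrable
      rw [Set.uIcc_of_le hβ2.le]
      have heq : Set.EqOn f (fun _ => (0:ℝ)) (Set.Icc 0 (β/2)) := fun s hs => by
        simp [hfdef, phicut_eq_zero hβ0 hs.2]
      exact continuousOn_const.congr heq
    have hi2 : IntervalIntegrable f volume (β/2) b := hfint _ _ hβ2 hβb
    have hi3 : IntervalIntegrable f volume b m := hfint _ _ hb0 hbm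
    have hi4 : IntervalIntegrable f volume m m' := hfint _ _ hm0 hmm'
    have hi5 : IntervalIntegrable f volume m' ξ := hfint _ _ (lt_of_lt_of_le hm0 hmm') hm'ξ
    have hsplit : Theta σ β M ξ =
        (∫ s in (0:ℝ)..(β/2), f s) + ((∫ s in (β/2)..b, f s)
          + ((∫ s in b..m, f s) + ((∫ s in m..m', f s) + (∫ s in m'..ξ, f s)))) := by
      unfold Theta
      rw [← hfdef]
      rw [intervalIntegral.integral_add_adjacent_intervals hi4 hi5,
          intervalIntegral.integral_add_adjacent_intervals hi3 (hi4.trans hi5),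
          intervalIntegral.integral_add_adjacent_intervals hi2 ((hi3.trans hi4).trans hi5),
          intervalIntegral.integral_add_adjacent_intervals hi1 (((hi2.trans hi3).trans hi4).trans hi5)]
    have E0 : (∫ s in (0:ℝ)..(β/2), f s) = 0 := by
      have hcong : Set.EqOn f (fun _ => (0:ℝ)) (Set.uIcc 0 (β/2)) := by
        intro s hs
        rw [Set.uIcc_of_le hβ2.le] at hs
        simp [hfdef, phicut_eq_zero hβ0 hs.2]
      rw [intervalIntegral.integral_congr hcong]
      simp
    -- integration by parts on [β/2, b]
    have hEcong1 : (∫ s in (β/2)..b, f s) = ∫ s in (β/2)..b, ((s - β/2)/(β/2)) * deriv σ s := by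
      apply intervalIntegral.integral_congr
      intro s hs
      rw [Set.uIcc_of_le hβb] at hs
      simp only [hfdef]
      rw [phicut_eq_lin hβ0 hs.1 (le_trans hs.2 hbβ),
        zetacut_eq_one (by linarith [hs.2] : s ≤ M)]
      ring
    have hparts1 : (∫ s in (β/2)..b, ((s - β/2)/(β/2)) * deriv σ s)
        = ((b - β/2)/(β/2)) * σ b - ((β/2 - β/2)/(β/2)) * σ (β/2)
          - ∫ s in (β/2)..b, (2/β) * σ s := by
      apply intervalIntegral.integral_mul_deriv_eq_deriv_mul
      · intro x _
        have h := ((hasDerivAt_id x).sub_const (β/2)).div_const (β/2)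
        have he : (1:ℝ)/(β/2) = 2/β := by
          field_simp
        rw [he] at h
        exact h
      · intro x hx
        rw [Set.uIcc_of_le hβb] at hx
        exact (hσd.differentiableAt (Ioi_mem_nhds (lt_of_lt_of_le hβ2 hx.1))).hasDerivAt
      · exact intervalIntegrable_const
      · exact hdint _ _ hβ2 hβb
    have hub0 : 0 ≤ (b - β/2)/(β/2) := div_nonneg (by linarith) hβ2.le
    have hub : (b - β/2)/(β/2) ≤ 1 := by rw [div_le_one hβ2]; linarith
    have hbnd : |∫ s in (β/2)..b, (2/β) * σ s| ≤ S₁ := by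
      have h1 : ∀ x ∈ Set.uIoc (β/2) b, ‖(2/β) * σ x‖ ≤ (2/β) * S₁ := by
        intro x hx
        rw [Set.uIoc_of_le hβb] at hx
        rw [Real.norm_eq_abs, abs_mul, abs_of_pos (by positivity : (0:ℝ) < 2/β)]
        exact mul_le_mul_of_nonneg_left (hS₁ x ⟨by linarith [hx.1], hx.2⟩) (by positivity)
      have h2 := intervalIntegral.norm_integral_le_of_norm_le_const h1
      rw [Real.norm_eq_abs] at h2
      calc |∫ s in (β/2)..b, (2/β) * σ s| ≤ (2/β) * S₁ * |b - β/2| := h2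
        _ ≤ (2/β) * S₁ * (β/2) := by
            apply mul_le_mul_of_nonneg_left _ (by positivity)
            rw [abs_of_nonneg (by linarith)]
            linarith
        _ = S₁ := by field_simp
    have hE1 : |∫ s in (β/2)..b, f s| ≤ 2 * S₁ := by
      rw [hEcong1, hparts1]
      have h0 : ((β/2 - β/2)/(β/2)) * σ (β/2) = 0 := by simp
      rw [h0, sub_zero]
      have hterm : |((b - β/2)/(β/2)) * σ b| ≤ S₁ := by
        rw [abs_mul, abs_of_nonneg hub0]
        calc ((b - β/2)/(β/2)) * |σ b| ≤ 1 * |σ b| :=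
              mul_le_mul_of_nonneg_right hub (abs_nonneg _)
          _ = |σ b| := one_mul _
          _ ≤ S₁ := hσb
      calc |((b - β/2)/(β/2)) * σ b - ∫ s in (β/2)..b, (2/β) * σ s|
          ≤ |((b - β/2)/(β/2)) * σ b| + |∫ s in (β/2)..b, (2/β) * σ s| := abs_sub _ _
        _ ≤ S₁ + S₁ := add_le_add hterm hbnd
        _ = 2 * S₁ := by ring
    have E2 : (∫ s in b..m, f s) = σ m - σ b := by
      rcases le_or_gt ξ β with hξβ | hξβ
      · have hb : b = ξ := min_eq_right hξβ
        have hm : m = ξ := min_eq_right (by linarith)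
        rw [hb, hm, intervalIntegral.integral_same, sub_self]
      · have hb : b = β := min_eq_left hξβ.le
        have hcong : Set.EqOn f (deriv σ) (Set.uIcc b m) := by
          intro s hs
          rw [Set.uIcc_of_le hbm] at hs
          simp only [hfdef]
          rw [phicut_eq_one hβ0 (hb ▸ hs.1), zetacut_eq_one (le_trans hs.2 hmM)]
          ring
        rw [intervalIntegral.integral_congr hcong]
        apply intervalIntegral.integral_eq_sub_of_hasDerivAt
        · intro x hx
          rw [Set.uIcc_of_le hbm] at hx
          exact (hσd.differentiableAt (Ioi_mem_nhds (lt_of_lt_of_le hb0 hx.1))).hasDerivAt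
        · exact hdint _ _ hb0 hbm
    by_cases hMξ : M < ξ
    · -- large ξ
      rw [if_pos hMξ, if_pos hMξ]
      have hm : m = M := min_eq_left hMξ.le
      have hMm' : M ≤ m' := le_min (by linarith) hMξ.le
      have hm'M1 : m' ≤ M + 1 := min_le_left _ _
      have hM0 : (0:ℝ) < M := by linarith
      set S₂ := sSup ((fun ξ' => |σ ξ'|) '' Set.Icc M m') with hS₂def
      have hσc2 : ContinuousOn σ (Set.Icc M m') :=
        hσc.mono (fun x hx => le_trans hM0.le hx.1)
      have hS₂ : ∀ x ∈ Set.Icc M m', |σ x| ≤ S₂ := fun x hx =>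
        le_csSup ((isCompact_Icc.image_of_continuousOn hσc2.abs).bddAbove) ⟨x, hx, rfl⟩
      have hS₂0 : 0 ≤ S₂ := le_trans (abs_nonneg _) (hS₂ M ⟨le_rfl, hMm'⟩)
      have hcong3 : (∫ s in m..m', f s) = ∫ s in M..m', (M + 1 - s) * deriv σ s := by
        rw [hm]
        apply intervalIntegral.integral_congr
        intro s hs
        rw [Set.uIcc_of_le hMm'] at hs
        simp only [hfdef]
        rw [phicut_eq_one hβ0 (by linarith [hs.1]), zetacut_eq_lin hs.1 (le_trans hs.2 hm'M1)]
        ring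
      have hparts3 : (∫ s in M..m', (M + 1 - s) * deriv σ s)
          = (M + 1 - m') * σ m' - (M + 1 - M) * σ M - ∫ s in M..m', (-1) * σ s := by
        apply intervalIntegral.integral_mul_deriv_eq_deriv_mul
        · intro x _
          simpa using (hasDerivAt_id x).const_sub (M + 1)
        · intro x hx
          rw [Set.uIcc_of_le hMm'] at hx
          exact (hσd.differentiableAt (Ioi_mem_nhds (by linarith [hx.1]))).hasDerivAt
        · exact intervalIntegrable_const
        · exact hdint _ _ hM0 hMm'
      have E4 : (∫ s in m'..ξ, f s) = 0 := by
        rcases le_or_gt ξ (M+1) with h | h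
        · have hm'ξ' : m' = ξ := min_eq_right h
          rw [hm'ξ', intervalIntegral.integral_same]
        · have hm'1 : m' = M + 1 := min_eq_left h.le
          have hcong : Set.EqOn f (fun _ => (0:ℝ)) (Set.uIcc m' ξ) := by
            intro s hs
            rw [Set.uIcc_of_le hm'ξ, hm'1] at hs
            simp [hfdef, zetacut_eq_zero hs.1]
          rw [intervalIntegral.integral_congr hcong]
          simp
      have h5 : (M + 1 - m') * σ m' = zetacut M ξ * σ ξ := by
        rcases le_or_gt ξ (M+1) with h | h
        · have hm'ξ' : m' = ξ := min_eq_right h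
          rw [hm'ξ', zetacut_eq_lin hMξ.le h]
        · have hm'1 : m' = M + 1 := min_eq_left h.le
          rw [hm'1, zetacut_eq_zero h.le]
          ring
      have key : Theta σ β M ξ - σ ξ
          = (∫ s in (β/2)..b, f s) - σ b + (zetacut M ξ - 1) * σ ξ
            + ∫ s in M..m', σ s := by
        rw [hsplit, E0, E2, hcong3, hparts3, E4, h5, hm]
        simp only [neg_one_mul, intervalIntegral.integral_neg]
        ring
      have hζ : |zetacut M ξ - 1| ≤ 1 := by
        have h1 : zetacut M ξ ≤ 1 := min_le_left _ _
        have h2 : 0 ≤ zetacut M ξ := le_min zero_le_one (le_max_left _ _)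
        rw [abs_sub_comm, abs_of_nonneg (by linarith)]
        linarith
      have hzb : |(zetacut M ξ - 1) * σ ξ| ≤ |σ ξ| := by
        rw [abs_mul]
        calc |zetacut M ξ - 1| * |σ ξ| ≤ 1 * |σ ξ| :=
              mul_le_mul_of_nonneg_right hζ (abs_nonneg _)
          _ = |σ ξ| := one_mul _
      have hI : |∫ s in M..m', σ s| ≤ S₂ := by
        have h1 : ∀ x ∈ Set.uIoc M m', ‖σ x‖ ≤ S₂ := by
          intro x hx
          rw [Set.uIoc_of_le hMm'] at hx
          rw [Real.norm_eq_abs]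
          exact hS₂ x ⟨hx.1.le, hx.2⟩
        have h2 := intervalIntegral.norm_integral_le_of_norm_le_const h1
        rw [Real.norm_eq_abs, abs_of_nonneg (by linarith : (0:ℝ) ≤ m' - M)] at h2
        calc |∫ s in M..m', σ s| ≤ S₂ * (m' - M) := h2
          _ ≤ S₂ * 1 := mul_le_mul_of_nonneg_left (by linarith) hS₂0
          _ = S₂ := mul_one _
      have habs : |Theta σ β M ξ - σ ξ| ≤ 2 * S₁ + S₁ + |σ ξ| + S₂ := by
        rw [key]
        have t1 := abs_add_le ((∫ s in (β/2)..b, f s) - σ b + (zetacut M ξ - 1) * σ ξ)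
          (∫ s in M..m', σ s)
        have t2 := abs_add_le ((∫ s in (β/2)..b, f s) - σ b) ((zetacut M ξ - 1) * σ ξ)
        have t3 := abs_sub (∫ s in (β/2)..b, f s) (σ b)
        linarith
      linarith [abs_nonneg (σ ξ)]
    · -- medium ξ
      rw [if_neg hMξ, if_neg hMξ]
      push_neg at hMξ
      have hm : m = ξ := min_eq_right hMξ
      have hm' : m' = ξ := min_eq_right (by linarith)
      have key : Theta σ β M ξ - σ ξ = (∫ s in (β/2)..b, f s) - σ b := by
        rw [hsplit, E0, E2, hm, hm', intervalIntegral.integral_same]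
        ring
      have habs : |Theta σ β M ξ - σ ξ| ≤ 2 * S₁ + S₁ := by
        rw [key]
        calc |(∫ s in (β/2)..b, f s) - σ b| ≤ |∫ s in (β/2)..b, f s| + |σ b| := abs_sub _ _
          _ ≤ 2 * S₁ + S₁ := add_le_add hE1 hσb
      linarith
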